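/- Let f : ℝ → ℝ be twice differentiable and satisfy the Airy equation f″(w) = w f(w) for all w ∈ ℝ. For z > 0 and λ > 0, set ζ = (z/2)^{1/3}, V_0(z) = (5 − 36ζ⁴)/(144ζ⁶), and define Ψ(z,λ) = λ^{−1/6} ζ^{1/2} f( (9/λ²)^{1/3} (1/4 + λζ²) ). Then for all z > 0 and λ > 0: (i) ∂²Ψ/∂z² + V_0(z) Ψ = λ Ψ; and (ii) ∂Ψ/∂λ = (1/2)( z/λ − ζ/λ² ) ∂Ψ/∂z − (1/4)( 1/λ − 1/(6ζ²λ²) ) Ψ. That is, Ψ solves both equations of the scalar Lax pair for the Painlevé III (D7) equation evaluated at the algebraic seed solution P_0 = ζ = (z/2)^{1/3} (for which P_0′ = 1/(6ζ²)). -/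

import Mathlib

/-!
With `σ = (z/2)^{1/6}` one has `ζ = σ²`, `ζ^{1/2} = σ` and `z = 2σ⁶`, so
`Ψ = λ^{-1/6} σ f(W)` with `W = a (1/4 + λσ⁴)`, `a = (9/λ²)^{1/3}`, and
`d/dz = (12σ⁵)⁻¹ d/dσ`.
Both Lax equations then become rational identities in `σ`, `λ`, `a`, `f(W)`, `f'(W)` once
`f''(W)` is replaced by `W f(W)`; the first one also needs `a³λ² = 9`, which is where the
constant `9` in the Airy argument comes from.
-/

open Real

noncomputable section

def sixthRootHalf (z : ℝ) : ℝ := (z / 2) ^ ((1 : ℝ) / 6)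

lemma sixthRootHalf_pos {z : ℝ} (hz : 0 < z) : 0 < sixthRootHalf z :=
  rpow_pos_of_pos (half_pos hz) _

lemma sixthRootHalf_pow {z : ℝ} (hz : 0 ≤ z) (n : ℕ) :
    sixthRootHalf z ^ n = (z / 2) ^ ((n : ℝ) / 6) := by
  rw [sixthRootHalf, ← rpow_natCast, ← rpow_mul (by positivity)]
  ring_nf

lemma sixthRootHalf_pow_six {z : ℝ} (hz : 0 ≤ z) : sixthRootHalf z ^ 6 = z / 2 := by
  rw [sixthRootHalf_pow hz]; norm_num

lemma half_rpow_third_eq_sixthRootHalf_sq {z : ℝ} (hz : 0 ≤ z) :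
    (z / 2) ^ ((1 : ℝ) / 3) = sixthRootHalf z ^ 2 := by
  rw [sixthRootHalf_pow hz]; norm_num

lemma half_rpow_third_rpow_half {z : ℝ} (hz : 0 ≤ z) :
    ((z / 2) ^ ((1 : ℝ) / 3)) ^ ((1 : ℝ) / 2) = sixthRootHalf z := by
  rw [← rpow_mul (by positivity), sixthRootHalf]; norm_num

lemma hasDerivAt_sixthRootHalf {z : ℝ} (hz : 0 < z) :
    HasDerivAt sixthRootHalf (1 / (12 * sixthRootHalf z ^ 5)) z := by
  have h := (hasDerivAt_rpow_const (p := (1 : ℝ) / 6) (Or.inl (half_pos hz).ne')).comp z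
    ((hasDerivAt_id z).div_const 2)
  refine h.congr_deriv ?_
  rw [sixthRootHalf_pow hz.le, show (1 : ℝ) / 6 - 1 = -((5 : ℕ) / 6) by norm_num,
    rpow_neg (half_pos hz).le]
  ring

lemma deriv_eq_of_eq_comp_sixthRootHalf {u G G' : ℝ → ℝ}
    (hu : ∀ x, 0 < x → u x = G (sixthRootHalf x))
    (hG : ∀ σ, 0 < σ → HasDerivAt G (G' σ) σ) {z : ℝ} (hz : 0 < z) :
    deriv u z = G' (sixthRootHalf z) / (12 * sixthRootHalf z ^ 5) := by
  have hev : u =ᶠ[nhds z] G ∘ sixthRootHalf :=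
    Filter.eventually_of_mem (Ioi_mem_nhds hz) hu
  have hcomp := (hG _ (sixthRootHalf_pos hz)).comp z (hasDerivAt_sixthRootHalf hz)
  rw [hev.deriv_eq, hcomp.deriv]
  ring

def airyScale (lam : ℝ) : ℝ := (9 / lam ^ 2) ^ ((1 : ℝ) / 3)

def airyArg (lam σ : ℝ) : ℝ := airyScale lam * (1 / 4 + lam * σ ^ 4)

lemma airyScale_pow_three_mul_sq {lam : ℝ} (hlam : lam ≠ 0) :
    airyScale lam ^ 3 * lam ^ 2 = 9 := by
  rw [airyScale, ← rpow_natCast, ← rpow_mul (by positivity)]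
  norm_num
  field_simp

lemma hasDerivAt_airyScale {lam : ℝ} (hlam : lam ≠ 0) :
    HasDerivAt airyScale (-(2 * airyScale lam) / (3 * lam)) lam := by
  have h9 : (0 : ℝ) < 9 / lam ^ 2 := by positivity
  have hinner : HasDerivAt (fun l : ℝ => 9 / l ^ 2) (-(18 / lam ^ 3)) lam := by
    refine ((hasDerivAt_const lam (9 : ℝ)).div (hasDerivAt_pow 2 lam)
      (pow_ne_zero 2 hlam)).congr_deriv ?_
    field_simp
    ring
  have hcube := hasDerivAt_rpow_const (p := (1 : ℝ) / 3) (Or.inl h9.ne')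
  refine (hcube.comp lam hinner).congr_deriv ?_
  rw [rpow_sub h9, rpow_one, airyScale]
  field_simp
  ring

lemma hasDerivAt_airyArg_lam {lam : ℝ} (σ : ℝ) (hlam : lam ≠ 0) :
    HasDerivAt (fun l => airyArg l σ) (airyScale lam * (σ ^ 4 / 3 - 1 / (6 * lam))) lam := by
  have hlin : HasDerivAt (fun l : ℝ => 1 / 4 + l * σ ^ 4) (σ ^ 4) lam := by
    simpa using ((hasDerivAt_id lam).mul_const (σ ^ 4)).const_add (1 / 4 : ℝ)
  refine ((hasDerivAt_airyScale hlam).mul hlin).congr_deriv ?_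
  field_simp
  ring

lemma hasDerivAt_comp_airyArg {g : ℝ → ℝ} (hg : Differentiable ℝ g) (lam σ : ℝ) :
    HasDerivAt (fun s => g (airyArg lam s))
      (deriv g (airyArg lam σ) * (4 * airyScale lam * lam * σ ^ 3)) σ := by
  have harg : HasDerivAt (airyArg lam) (4 * airyScale lam * lam * σ ^ 3) σ := by
    refine ((((hasDerivAt_pow 4 σ).const_mul lam).const_add (1 / 4)).const_mul
      (airyScale lam)).congr_deriv ?_
    push_cast
    ring
  exact (hg _).hasDerivAt.comp σ harg

/-- The solution `Ψ` in the coordinates `(λ, σ)` with `σ = (z/2)^{1/6}`. -/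
def laxProfile (f : ℝ → ℝ) (lam σ : ℝ) : ℝ :=
  lam ^ (-(1 : ℝ) / 6) * σ * f (airyArg lam σ)

/-- `∂Ψ/∂z` in the coordinates `(λ, σ)`. -/
def laxProfileDerivZ (f : ℝ → ℝ) (lam σ : ℝ) : ℝ :=
  lam ^ (-(1 : ℝ) / 6) * (f (airyArg lam σ)
    + 4 * airyScale lam * lam * σ ^ 4 * deriv f (airyArg lam σ)) / (12 * σ ^ 5)

section

variable {f : ℝ → ℝ}

lemma hasDerivAt_laxProfile (hf1 : Differentiable ℝ f) (lam σ : ℝ) :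
    HasDerivAt (laxProfile f lam) (lam ^ (-(1 : ℝ) / 6) * (f (airyArg lam σ)
      + 4 * airyScale lam * lam * σ ^ 4 * deriv f (airyArg lam σ))) σ := by
  refine (((hasDerivAt_id' σ).const_mul _).mul (hasDerivAt_comp_airyArg hf1 lam σ)).congr_deriv ?_
  ring

lemma hasDerivAt_laxProfile_lam (hf1 : Differentiable ℝ f) {lam : ℝ} (σ : ℝ)
    (hlam : 0 < lam) :
    HasDerivAt (fun l => laxProfile f l σ) (lam ^ (-(1 : ℝ) / 6) * σ
      * (deriv f (airyArg lam σ) * airyScale lam * (σ ^ 4 / 3 - 1 / (6 * lam))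
        - f (airyArg lam σ) / (6 * lam))) lam := by
  have hpow := hasDerivAt_rpow_const (p := -(1 : ℝ) / 6) (Or.inl hlam.ne')
  have hf := (hf1 _).hasDerivAt.comp lam (hasDerivAt_airyArg_lam σ hlam.ne')
  refine ((hpow.mul_const σ).mul hf).congr_deriv ?_
  rw [rpow_sub hlam, rpow_one, Function.comp_apply]
  field_simp
  ring

lemma hasDerivAt_laxProfileDerivZ (hf1 : Differentiable ℝ f) (hf2 : Differentiable ℝ (deriv f))
    (hAiry : ∀ w, deriv (deriv f) w = w * f w) (lam : ℝ) {σ : ℝ} (hσ : σ ≠ 0) :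
    HasDerivAt (laxProfileDerivZ f lam) (lam ^ (-(1 : ℝ) / 6)
      * (4 * airyScale lam ^ 2 * lam ^ 2 * σ ^ 2 * airyArg lam σ * f (airyArg lam σ) / 3
        - 5 * f (airyArg lam σ) / (12 * σ ^ 6))) σ := by
  have hnum := (hasDerivAt_comp_airyArg hf1 lam σ).add
    (((hasDerivAt_pow 4 σ).const_mul (4 * airyScale lam * lam)).mul
      (hasDerivAt_comp_airyArg hf2 lam σ))
  have hden := (hasDerivAt_pow 5 σ).const_mul (12 : ℝ)
  refine ((hnum.const_mul _).div hden (by positivity)).congr_deriv ?_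
  rw [Pi.add_apply, Pi.mul_apply, hAiry]
  field_simp
  ring

end

end

/-- Airy-function solution of the scalar Lax pair for Painlevé III (D7) at the
algebraic seed solution `P_0 = ζ = (z/2)^{1/3}` (for which `P_0' = 1/(6ζ²)`), with
associated potential `V_0 = (5 - 36ζ⁴)/(144ζ⁶)`: if `f'' (w) = w f(w)` for all `w`,
then `Ψ(z,λ) = λ^{-1/6} ζ^{1/2} f((9/λ²)^{1/3}(1/4 + λζ²))` satisfies
`Ψ_zz + V_0 Ψ = λΨ` and `Ψ_λ = (1/2)(z/λ - ζ/λ²)Ψ_z - (1/4)(1/λ - 1/(6ζ²λ²))Ψ`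
for all `z > 0`, `λ > 0`. -/
theorem airy_solves_laxpair_PIIID7 (f : ℝ → ℝ)
    (hf1 : Differentiable ℝ f) (hf2 : Differentiable ℝ (deriv f))
    (hAiry : ∀ w : ℝ, deriv (deriv f) w = w * f w)
    (Ψ : ℝ → ℝ → ℝ)
    (hΨ : ∀ z lam : ℝ, Ψ z lam =
      lam ^ (-(1 : ℝ) / 6) * ((z / 2) ^ ((1 : ℝ) / 3)) ^ ((1 : ℝ) / 2)
        * f ((9 / lam ^ 2) ^ ((1 : ℝ) / 3)
            * (1 / 4 + lam * ((z / 2) ^ ((1 : ℝ) / 3)) ^ 2))) :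
    ∀ z lam : ℝ, 0 < z → 0 < lam →
      (deriv (deriv (fun z' => Ψ z' lam)) z
          + (5 - 36 * ((z / 2) ^ ((1 : ℝ) / 3)) ^ 4)
              / (144 * ((z / 2) ^ ((1 : ℝ) / 3)) ^ 6) * Ψ z lam
        = lam * Ψ z lam) ∧
      (deriv (fun l => Ψ z l) lam
        = 1 / 2 * (z / lam - (z / 2) ^ ((1 : ℝ) / 3) / lam ^ 2)
            * deriv (fun z' => Ψ z' lam) z
          - 1 / 4 * (1 / lam - 1 / (6 * ((z / 2) ^ ((1 : ℝ) / 3)) ^ 2 * lam ^ 2))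
            * Ψ z lam) := by
  intro z lam hz hlam
  have hΨσ : ∀ x, 0 < x → ∀ l, Ψ x l = laxProfile f l (sixthRootHalf x) := fun x hx l => by
    rw [hΨ, half_rpow_third_rpow_half hx.le, half_rpow_third_eq_sixthRootHalf_sq hx.le,
      ← pow_mul]
    rfl
  have hΨz : ∀ x, 0 < x →
      deriv (fun z' => Ψ z' lam) x = laxProfileDerivZ f lam (sixthRootHalf x) :=
    fun x hx => deriv_eq_of_eq_comp_sixthRootHalf (fun y hy => hΨσ y hy lam)
      (fun σ _ => hasDerivAt_laxProfile hf1 lam σ) hx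
  have hΨzz := deriv_eq_of_eq_comp_sixthRootHalf hΨz
    (fun σ hσ => hasDerivAt_laxProfileDerivZ hf1 hf2 hAiry lam hσ.ne') hz
  have hΨlam : deriv (fun l => Ψ z l) lam = _ :=
    (funext (hΨσ z hz) ▸ hasDerivAt_laxProfile_lam hf1 (sixthRootHalf z) hlam).deriv
  rw [hΨzz, hΨz z hz, hΨlam, hΨσ z hz lam, half_rpow_third_eq_sixthRootHalf_sq hz.le]
  have hz6 : z = 2 * sixthRootHalf z ^ 6 := by rw [sixthRootHalf_pow_six hz.le]; ring
  have hσ := (sixthRootHalf_pos hz).ne'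
  have ha3 := airyScale_pow_three_mul_sq hlam.ne'
  generalize sixthRootHalf z = σ at *
  subst hz6
  simp only [laxProfile, laxProfileDerivZ]
  generalize f (airyArg lam σ) = F, deriv f (airyArg lam σ) = F'
  rw [airyArg]
  constructor
  · field_simp
    linear_combination 1728 * σ ^ 8 * (1 + 4 * lam * σ ^ 4) * F * ha3
  · field_simp
    ring
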